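/- arXiv:1411.6917 — 4 statements merged into one kernel-verified Lean document; each statement's English description precedes it below -/
import Mathlib

section
/- For all integers n ≥ 1 and m, k ≥ 0 with δ_i ∈ {0,1}, if f(k⃗) and g(k⃗) are weighted counts of finite sets A_{k⃗} and B_{k⃗} and there exist weight-preserving bijections φ_{k⃗} : A_{k⃗} ∪ (⋃_{i: δ_i=0} H_{i,S_i k⃗}) → B_{k⃗} ∪ (⋃_{i=1}^m H_{i,k⃗}) ∪ (⋃_{i: δ_i=1} H_{i,S_i k⃗}), where S_i shifts the i-th coordinate by 1, and the sets H_{i,k⃗} are empty for k⃗ = 0 and for all sufficiently large k⃗, then ∑_{k⃗≥0} (-1)^{δ⃗·k⃗} f(k⃗) = ∑_{k⃗≥0} (-1)^{δ⃗·k⃗} g(k⃗). -/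
open Finset

/-! With `s κ = (-1) ^ (δ · κ)` and `h_i κ = ∑_{a ∈ H_{i,κ}} w a`, the bijection `φ_κ` gives
`f κ - g κ = ∑_i h_i κ - ∑_i (-1) ^ δ_i h_i (S_i κ)`. Since `s (S_i κ) = (-1) ^ δ_i s κ`,
multiplying by `s κ` writes `s f - s g` as `∑_i (G_i - G_i ∘ S_i)` with `G_i = s h_i`. Each `G_i`
has finite support and vanishes outside the range of `S_i` (where `κ_i = 0`), so
`∑_κ G_i (S_i κ) = ∑_κ G_i κ` and the whole difference telescopes to zero. -/

/-- The shift operator `S_i` on multi-indices: `S_i κ` increases the `i`-th coordinate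
of `κ` by one. -/
def shiftIdx {m : ℕ} (i : Fin m) (κ : Fin m → ℕ) : Fin m → ℕ :=
  Function.update κ i (κ i + 1)

section MultiIndex

variable {m : ℕ}

lemma shiftIdx_eq_add_single (i : Fin m) (κ : Fin m → ℕ) :
    shiftIdx i κ = κ + Pi.single i 1 := by
  ext j
  rcases eq_or_ne j i with rfl | hji <;> simp [shiftIdx, *]

lemma shiftIdx_injective (i : Fin m) : Function.Injective (shiftIdx i) := by
  intro κ κ' h
  simpa [shiftIdx_eq_add_single] using h

lemma mem_range_shiftIdx {i : Fin m} {κ : Fin m → ℕ} (hκ : κ i ≠ 0) :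
    κ ∈ Set.range (shiftIdx i) :=
  ⟨Function.update κ i (κ i - 1), by
    simp [shiftIdx, Nat.sub_add_cancel (Nat.pos_of_ne_zero hκ)]⟩

lemma sum_mul_shiftIdx (δ : Fin m → ℕ) (i : Fin m) (κ : Fin m → ℕ) :
    ∑ j, δ j * shiftIdx i κ j = δ i + ∑ j, δ j * κ j := by
  simp [shiftIdx_eq_add_single, mul_add, Finset.sum_add_distrib, Pi.single_apply, add_comm]

lemma finsum_comp_shiftIdx {M : Type*} [AddCommMonoid M] {i : Fin m}
    {G : (Fin m → ℕ) → M} (hG : ∀ κ, κ i = 0 → G κ = 0) :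
    ∑ᶠ κ, G (shiftIdx i κ) = ∑ᶠ κ, G κ := by
  rw [← finsum_mem_range (shiftIdx_injective i), finsum_mem_def, Set.indicator_eq_self.2]
  exact fun κ hκ => mem_range_shiftIdx (mt (hG κ) hκ)

lemma finite_setOf_sum_lt (N : ℕ) : {κ : Fin m → ℕ | ∑ j, κ j < N}.Finite :=
  (Set.finite_Iic fun _ => N).subset fun _ hκ j =>
    ((Finset.single_le_sum (fun _ _ => Nat.zero_le _) (Finset.mem_univ j)).trans hκ.le)

lemma sum_neg_one_pow_mul_eq_sub {ι R : Type*} [Fintype ι] [CommRing R] {δ : ι → ℕ}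
    (hδ : ∀ i, δ i ≤ 1) (x : ι → R) :
    ∑ i, (-1 : R) ^ δ i * x i = ∑ i : {i // δ i = 0}, x i - ∑ i : {i // δ i = 1}, x i := by
  classical
  rw [← Finset.sum_subtype {i | δ i = 0} (by simp), ← Finset.sum_subtype {i | δ i = 1} (by simp),
    Finset.sum_filter, Finset.sum_filter, ← Finset.sum_sub_distrib]
  refine Finset.sum_congr rfl fun i _ => ?_
  rcases Nat.le_one_iff_eq_zero_or_eq_one.1 (hδ i) with h | h <;> simp [h]

theorem finsum_neg_one_pow_mul_eq_of_telescoping {R : Type*} [CommRing R] {δ : Fin m → ℕ}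
    (hδ : ∀ i, δ i ≤ 1) {f g : (Fin m → ℕ) → R} {h : Fin m → (Fin m → ℕ) → R}
    (hf : Function.HasFiniteSupport fun κ => (-1 : R) ^ (∑ i, δ i * κ i) * f κ)
    (hg : Function.HasFiniteSupport fun κ => (-1 : R) ^ (∑ i, δ i * κ i) * g κ)
    (hh : ∀ i, Function.HasFiniteSupport (h i)) (hh0 : ∀ i κ, κ i = 0 → h i κ = 0)
    (hfg : ∀ κ, f κ + ∑ i : {i // δ i = 0}, h i (shiftIdx i κ) =
      g κ + (∑ i, h i κ + ∑ i : {i // δ i = 1}, h i (shiftIdx i κ))) :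
    ∑ᶠ κ, (-1 : R) ^ (∑ i, δ i * κ i) * f κ = ∑ᶠ κ, (-1 : R) ^ (∑ i, δ i * κ i) * g κ := by
  set s : (Fin m → ℕ) → R := fun κ => (-1 : R) ^ (∑ i, δ i * κ i)
  set G : Fin m → (Fin m → ℕ) → R := fun i κ => s κ * h i κ
  have hG : ∀ i, Function.HasFiniteSupport (G i) := fun i => (hh i).fun_mul_right s
  have hG_shift : ∀ i κ, G i (shiftIdx i κ) = s κ * ((-1) ^ δ i * h i (shiftIdx i κ)) := by
    intro i κ
    simp only [G, s, sum_mul_shiftIdx, pow_add]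
    ring
  have hpoint : ∀ κ, s κ * f κ - s κ * g κ = ∑ i, (G i κ - G i (shiftIdx i κ)) := by
    intro κ
    rw [Finset.sum_sub_distrib, Finset.sum_congr rfl fun i _ => hG_shift i κ, ← Finset.mul_sum,
      ← Finset.mul_sum, sum_neg_one_pow_mul_eq_sub hδ]
    linear_combination s κ * hfg κ
  have htele : ∀ i, ∑ᶠ κ, (G i κ - G i (shiftIdx i κ)) = 0 := by
    intro i
    rw [finsum_sub_distrib (hG i) ((hG i).fun_comp_of_injective (shiftIdx_injective i)),
      finsum_comp_shiftIdx fun κ hκ => by simp [G, hh0 i κ hκ], sub_self]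
  rw [← sub_eq_zero, ← finsum_sub_distrib hf hg, finsum_congr hpoint, ← sum_finsum_comm]
  · exact Finset.sum_eq_zero fun i _ => htele i
  · exact fun i _ => (hG i).sub ((hG i).fun_comp_of_injective (shiftIdx_injective i))

end MultiIndex

/-- The method of multiple combinatorial telescoping: let `f(κ) = ∑_{α ∈ A_κ} w(α)` and
`g(κ) = ∑_{α ∈ B_κ} w(α)` be weighted counts of finite sets indexed by multi-indices
`κ : Fin m → ℕ`, with weights in a commutative ring, and let `δ : Fin m → ℕ` take values
in `{0,1}`.  Suppose the auxiliary sets `H_{i,κ}` are empty whenever `κ_i = 0` and for all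
sufficiently large `κ`, that the sums `∑_κ (±1)^{δ·κ} f(κ)` and `∑_κ (±1)^{δ·κ} g(κ)` have
finite support, and that for every `κ` there is a weight-preserving bijection
`φ_κ : A_κ ⊔ (⊔_{i : δ_i = 0} H_{i, S_i κ}) →
  B_κ ⊔ (⊔_{i} H_{i,κ}) ⊔ (⊔_{i : δ_i = 1} H_{i, S_i κ})`.
Then `∑_κ (-1)^{δ·κ} f(κ) = ∑_κ (-1)^{δ·κ} g(κ)`. -/
theorem multiple_combinatorial_telescoping
    {R : Type*} [CommRing R] {α : Type*} (w : α → R) (m : ℕ)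
    (δ : Fin m → ℕ) (hδ : ∀ i, δ i ≤ 1)
    (A B : (Fin m → ℕ) → Finset α) (H : Fin m → (Fin m → ℕ) → Finset α)
    (hfA : (Function.support fun κ : Fin m → ℕ =>
      (-1 : R) ^ (∑ i, δ i * κ i) * ∑ a ∈ A κ, w a).Finite)
    (hfB : (Function.support fun κ : Fin m → ℕ =>
      (-1 : R) ^ (∑ i, δ i * κ i) * ∑ a ∈ B κ, w a).Finite)
    (hH0 : ∀ (i : Fin m) (κ : Fin m → ℕ), κ i = 0 → H i κ = ∅)
    (hHbig : ∃ N : ℕ, ∀ (i : Fin m) (κ : Fin m → ℕ), N ≤ ∑ j, κ j → H i κ = ∅)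
    (hbij : ∀ κ : Fin m → ℕ,
      ∃ e : (↥(A κ) ⊕ Σ i : {i : Fin m // δ i = 0}, ↥(H i.1 (shiftIdx i.1 κ))) ≃
            (↥(B κ) ⊕ (Σ i : Fin m, ↥(H i κ)) ⊕
              Σ i : {i : Fin m // δ i = 1}, ↥(H i.1 (shiftIdx i.1 κ))),
        ∀ x,
          Sum.elim (fun b => w b.1)
            (Sum.elim (fun s => w s.2.1) (fun s => w s.2.1)) (e x) =
          Sum.elim (fun a => w a.1) (fun s => w s.2.1) x) :
    ∑ᶠ κ : Fin m → ℕ, (-1 : R) ^ (∑ i, δ i * κ i) * ∑ a ∈ A κ, w a =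
      ∑ᶠ κ : Fin m → ℕ, (-1 : R) ^ (∑ i, δ i * κ i) * ∑ a ∈ B κ, w a := by
  obtain ⟨N, hN⟩ := hHbig
  refine finsum_neg_one_pow_mul_eq_of_telescoping hδ hfA hfB (h := fun i κ => ∑ a ∈ H i κ, w a)
    (fun i => (finite_setOf_sum_lt N).subset fun κ hκ => ?_)
    (fun i κ hκ => by simp [hH0 i κ hκ]) (fun κ => ?_)
  · by_contra hbig
    exact hκ (by simp [hN i κ (not_lt.1 hbig)])
  · obtain ⟨e, he⟩ := hbij κ
    have hsum := Fintype.sum_equiv e _ _ fun x => (he x).symm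
    simpa only [Fintype.sum_sum_type, Fintype.sum_sigma, Sum.elim_inl, Sum.elim_inr,
      Finset.sum_coe_sort] using hsum
end

section
/- As an identity of formal power series in a and q: ∑_{m,k≥0} (-a)^m q^{(m-k)^2+k^2+m-k} / (aq^2;q^2)_m · qbinom(m, 2k-1) = ∑_{n≥1} (-a)^n q^{n^2}, where qbinom(m, 2k-1) denotes the Gaussian binomial coefficient [m choose 2k-1]_q, interpreted as zero when 2k-1 < 0 or 2k-1 > m. -/
open PowerSeries Finset

/-- The q-Pochhammer symbol `(a; q)_n = ∏_{j=0}^{n-1} (1 - a q^j)` in `ℤ[[q]]`. -/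
noncomputable def qPoch (a : PowerSeries ℤ) (n : ℕ) : PowerSeries ℤ :=
  ∏ j ∈ Finset.range n, (1 - a * PowerSeries.X ^ j)

/-- The Gaussian binomial coefficient `[m choose r]_q = (q;q)_m / ((q;q)_r (q;q)_{m-r})`
as an element of `ℤ[[q]]` (zero when `r > m`). -/
noncomputable def gaussBinom (m r : ℕ) : PowerSeries ℤ :=
  if r ≤ m then
    qPoch PowerSeries.X m *
      Ring.inverse (qPoch PowerSeries.X r * qPoch PowerSeries.X (m - r))
  else 0

/-- We work in `ℤ[[q]][[a]]`, with `a` the outer variable and `q` the inner one. -/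
noncomputable abbrev Aq : Type := PowerSeries (PowerSeries ℤ)

/-- `(a q^2; q^2)_m = ∏_{j=0}^{m-1} (1 - a q^{2j+2})` as an element of `ℤ[[q]][[a]]`. -/
noncomputable def pochA (m : ℕ) : Aq :=
  ∏ j ∈ Finset.range m,
    (1 - PowerSeries.X * PowerSeries.C (R := PowerSeries ℤ) (PowerSeries.X ^ (2 * j + 2)))

/-!
Let `S m = oddBinomSum m` be the inner sum over `k` and `U m = evenBinomSum m` its companion over
the even bottom indices. Pascal's rule for Gaussian binomials gives `S (m+1) = q U m + q^(2m+1) S m`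
and `U (m+1) = q^(2m+2) (U m + S m)`. Put these into `F(a) = ∑_m (-a)^m S m / (aq^2;q^2)_m` and
peel a factor off `(aq^2;q^2)_(m+1)` in the two possible ways, `(aq^2;q^2)_m (1 - a q^(2m+2))`
and `(1 - a q^2) (aq^4;q^2)_m`: this yields the q-difference equation
`1 + F(a) = 1 - a q (1 + F(a q^2))`. The theta series `∑_{n ≥ 0} (-a)^n q^(n^2)` satisfies the
same equation, and the equation determines its solution coefficient by coefficient in `a`.
-/

namespace PowerSeries

variable {R : Type*} [CommSemiring R]

theorem rescale_C (a b : R) : rescale a (C b) = C b := by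
  ext n
  cases n <;> simp [coeff_C]

theorem eq_zero_of_eq_X_mul_C_mul_rescale {c d : R} {f : R⟦X⟧}
    (h : f = X * (C c * rescale d f)) : f = 0 := by
  ext n
  induction n with
  | zero => rw [h]; simp
  | succ n ih => rw [h, coeff_succ_X_mul, coeff_C_mul, coeff_rescale, ih]; simp

theorem coeff_pow_mul_of_lt {φ : R⟦X⟧} (hφ : constantCoeff φ = 0) (g : R⟦X⟧) {d m : ℕ}
    (h : d < m) : coeff d (φ ^ m * g) = 0 := by
  obtain ⟨ψ, rfl⟩ := X_dvd_iff.mpr hφ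
  rw [mul_pow, mul_assoc, coeff_X_pow_mul', if_neg (by omega)]

namespace WithPiTopology

variable [TopologicalSpace R]

theorem summable_pow_mul {φ : R⟦X⟧} (hφ : constantCoeff φ = 0) (g : ℕ → R⟦X⟧) :
    Summable fun m ↦ φ ^ m * g m := by
  rw [summable_iff_summable_coeff]
  intro d
  apply summable_of_ne_finset_zero (s := range (d + 1))
  intro m hm
  exact coeff_pow_mul_of_lt hφ _ (by simpa using hm)

theorem coeff_tsum_pow_mul [T2Space R] {φ : R⟦X⟧} (hφ : constantCoeff φ = 0)
    (g : ℕ → R⟦X⟧) (d : ℕ) :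
    coeff d (∑' m, φ ^ m * g m) = coeff d (∑ m ∈ range (d + 1), φ ^ m * g m) := by
  rw [((summable_pow_mul hφ g).hasSum.map _ (continuous_coeff R d)).tsum_eq.symm, map_sum]
  exact tsum_eq_sum fun m hm ↦ coeff_pow_mul_of_lt hφ _ (by simpa using hm)

theorem HasSum.rescale [IsTopologicalSemiring R] {ι : Type*} {f : ι → R⟦X⟧} {g : R⟦X⟧}
    (h : HasSum f g) (c : R) : HasSum (fun i ↦ rescale c (f i)) (rescale c g) := by
  rw [hasSum_iff_hasSum_coeff] at h ⊢
  intro d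
  simpa only [coeff_rescale] using (h d).mul_left (c ^ d)

end WithPiTopology

end PowerSeries

theorem isUnit_qPoch_X (n : ℕ) : IsUnit (qPoch X n) := by
  simp [isUnit_iff_constantCoeff, qPoch]

theorem qPoch_zero (a : ℤ⟦X⟧) : qPoch a 0 = 1 := prod_range_zero _

theorem qPoch_succ (a : ℤ⟦X⟧) (n : ℕ) : qPoch a (n + 1) = qPoch a n * (1 - a * X ^ n) :=
  prod_range_succ _ n

theorem gaussBinom_add_mul (r s : ℕ) :
    gaussBinom (r + s) r * (qPoch X r * qPoch X s) = qPoch X (r + s) := by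
  rw [gaussBinom, if_pos (Nat.le_add_right r s), Nat.add_sub_cancel_left, mul_assoc,
    Ring.inverse_mul_cancel _ ((isUnit_qPoch_X r).mul (isUnit_qPoch_X s)), mul_one]

theorem gaussBinom_zero_right (m : ℕ) : gaussBinom m 0 = 1 := by
  have h := gaussBinom_add_mul 0 m
  rw [zero_add, qPoch_zero, one_mul] at h
  exact (isUnit_qPoch_X m).mul_right_cancel (h.trans (one_mul _).symm)

theorem gaussBinom_self (m : ℕ) : gaussBinom m m = 1 := by
  have h := gaussBinom_add_mul m 0
  rw [add_zero, qPoch_zero, mul_one] at h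
  exact (isUnit_qPoch_X m).mul_right_cancel (h.trans (one_mul _).symm)

theorem gaussBinom_of_lt {m r : ℕ} (h : m < r) : gaussBinom m r = 0 :=
  if_neg (Nat.not_le.mpr h)

theorem gaussBinom_succ_succ (m r : ℕ) :
    gaussBinom (m + 1) (r + 1) = gaussBinom m r + X ^ (r + 1) * gaussBinom m (r + 1) := by
  rcases lt_trichotomy r m with hrm | rfl | hmr
  · obtain ⟨s, rfl⟩ := Nat.exists_eq_add_of_lt hrm
    apply ((isUnit_qPoch_X (r + 1)).mul (isUnit_qPoch_X (s + 1))).mul_left_cancel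
    have h₀ := gaussBinom_add_mul (r + 1) (s + 1)
    have h₁ := gaussBinom_add_mul r (s + 1)
    have h₂ := gaussBinom_add_mul (r + 1) s
    rw [show r + 1 + (s + 1) = r + s + 1 + 1 by ring, qPoch_succ X (r + s + 1)] at h₀
    rw [show r + (s + 1) = r + s + 1 by ring] at h₁
    rw [show r + 1 + s = r + s + 1 by ring] at h₂
    simp only [qPoch_succ X r, qPoch_succ X s] at h₀ h₁ h₂ ⊢
    linear_combination h₀ - (1 - X * X ^ r) * h₁ - X ^ (r + 1) * (1 - X * X ^ s) * h₂
  · rw [gaussBinom_of_lt (Nat.lt_succ_self r), mul_zero, add_zero, gaussBinom_self,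
      gaussBinom_self]
  · rw [gaussBinom_of_lt hmr, gaussBinom_of_lt (by omega), gaussBinom_of_lt (by omega)]
    ring

theorem sum_range_mul_gaussBinom_of_le {m n N : ℕ} (f : ℕ → ℤ⟦X⟧) {r : ℕ → ℕ}
    (hr : ∀ k, n ≤ k → m < r k) (hN : n ≤ N) :
    ∑ k ∈ range N, f k * gaussBinom m (r k) = ∑ k ∈ range n, f k * gaussBinom m (r k) := by
  refine (sum_subset (range_subset_range.mpr hN) fun k _ hk ↦ ?_).symm
  rw [gaussBinom_of_lt (hr k (by simpa using hk)), mul_zero]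

-- The summation index `k` is the `k - 1` of the statement, so the bottom index `2k - 1` becomes
-- `2k + 1` without truncated subtraction.
noncomputable def oddBinomSum (m : ℕ) : ℤ⟦X⟧ :=
  ∑ k ∈ range m,
    X ^ ((m - (k + 1)) ^ 2 + (k + 1) ^ 2 + (m - (k + 1))) * gaussBinom m (2 * k + 1)

noncomputable def evenBinomSum (m : ℕ) : ℤ⟦X⟧ :=
  ∑ j ∈ range (m + 1), X ^ ((m - j) ^ 2 + j ^ 2 + (m + j)) * gaussBinom m (2 * j)

theorem oddBinomSum_zero : oddBinomSum 0 = 0 := sum_range_zero _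

theorem evenBinomSum_zero : evenBinomSum 0 = 1 := by
  simp [evenBinomSum, gaussBinom_zero_right]

theorem oddBinomSum_eq_sum_range {m N : ℕ} (h : m ≤ N) :
    oddBinomSum m = ∑ k ∈ range N,
      X ^ ((m - (k + 1)) ^ 2 + (k + 1) ^ 2 + (m - (k + 1))) * gaussBinom m (2 * k + 1) :=
  (sum_range_mul_gaussBinom_of_le _ (fun _ _ ↦ by omega) h).symm

theorem oddBinomSum_succ (m : ℕ) :
    oddBinomSum (m + 1) = X * evenBinomSum m + X ^ (2 * m + 1) * oddBinomSum m := by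
  rw [oddBinomSum, evenBinomSum, oddBinomSum_eq_sum_range (Nat.le_succ m), mul_sum, mul_sum,
    ← sum_add_distrib]
  refine sum_congr rfl fun k hk ↦ ?_
  have hkm : k ≤ m := Nat.lt_succ_iff.mp (mem_range.mp hk)
  rw [gaussBinom_succ_succ, mul_add, Nat.add_sub_add_right]
  congr 1
  · obtain ⟨d, rfl⟩ := Nat.exists_eq_add_of_le hkm
    rw [Nat.add_sub_cancel_left]
    ring
  · rcases hkm.lt_or_eq with hkm | rfl
    · obtain ⟨d, rfl⟩ := Nat.exists_eq_add_of_lt hkm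
      rw [show k + d + 1 - k = d + 1 by omega, show k + d + 1 - (k + 1) = d by omega]
      ring
    · rw [gaussBinom_of_lt (by omega)]
      ring

theorem evenBinomSum_succ (m : ℕ) :
    evenBinomSum (m + 1) = X ^ (2 * m + 2) * (evenBinomSum m + oddBinomSum m) := by
  rw [evenBinomSum, evenBinomSum, oddBinomSum, sum_range_succ', sum_range_succ, sum_range_succ',
    gaussBinom_of_lt (by omega : m + 1 < 2 * (m + 1)), mul_zero, add_zero, mul_add, mul_add,
    mul_sum, mul_sum]
  conv_rhs => rw [add_right_comm, ← sum_add_distrib]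
  congr 1
  · refine sum_congr rfl fun j hj ↦ ?_
    obtain ⟨d, rfl⟩ := Nat.exists_eq_add_of_lt (mem_range.mp hj)
    rw [mul_add 2 j 1, mul_one, gaussBinom_succ_succ, show j + d + 1 + 1 - (j + 1) = d + 1 by omega,
      show j + d + 1 - (j + 1) = d by omega]
    ring
  · simp only [mul_zero, gaussBinom_zero_right, Nat.sub_zero]
    ring

theorem isUnit_pochA (m : ℕ) : IsUnit (pochA m) := by
  simp [isUnit_iff_constantCoeff, pochA]

theorem pochA_succ (m : ℕ) : pochA (m + 1) = pochA m * (1 - X * C (X ^ (2 * m + 2))) :=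
  prod_range_succ _ m

theorem pochA_succ_eq_mul_rescale (m : ℕ) :
    pochA (m + 1) = (1 - X * C (X ^ 2)) * rescale (X ^ 2) (pochA m) := by
  rw [pochA, prod_range_succ', pochA, map_prod, mul_comm]
  congr 1
  refine prod_congr rfl fun j _ ↦ ?_
  rw [map_sub, map_one, map_mul, rescale_X, rescale_C, mul_comm (C _) X, mul_assoc, ← map_mul,
    ← pow_add]
  ring_nf

theorem inverse_pochA_eq (m : ℕ) :
    Ring.inverse (pochA m) = (1 - X * C (X ^ (2 * m + 2))) * Ring.inverse (pochA (m + 1)) := by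
  rw [Ring.eq_mul_inverse_iff_mul_eq _ _ _ (isUnit_pochA _), pochA_succ, ← mul_assoc,
    Ring.inverse_mul_cancel _ (isUnit_pochA m), one_mul]

theorem rescale_inverse_pochA_eq (m : ℕ) :
    rescale (X ^ 2) (Ring.inverse (pochA m)) =
      (1 - X * C (X ^ 2)) * Ring.inverse (pochA (m + 1)) := by
  rw [Ring.eq_mul_inverse_iff_mul_eq _ _ _ (isUnit_pochA _), pochA_succ_eq_mul_rescale,
    mul_left_comm, ← map_mul, Ring.inverse_mul_cancel _ (isUnit_pochA m), map_one, mul_one]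

open PowerSeries.WithPiTopology

-- `∑_m (-a)^m P_m(q) / (aq^2;q^2)_(m+k)`, summed in the product topology of `ℤ⟦q⟧⟦a⟧`.
noncomputable def pochSeries (P : ℕ → ℤ⟦X⟧) (k : ℕ) : Aq :=
  ∑' m, (-X) ^ m * (C (P m) * Ring.inverse (pochA (m + k)))

theorem summable_pochSeries (P : ℕ → ℤ⟦X⟧) (k : ℕ) :
    Summable fun m ↦ (-X : Aq) ^ m * (C (P m) * Ring.inverse (pochA (m + k))) :=
  summable_pow_mul (by simp) _

theorem pochSeries_add (P Q : ℕ → ℤ⟦X⟧) (k : ℕ) :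
    pochSeries (fun m ↦ P m + Q m) k = pochSeries P k + pochSeries Q k := by
  simp only [pochSeries, map_add, add_mul, mul_add]
  exact (summable_pochSeries P k).tsum_add (summable_pochSeries Q k)

theorem pochSeries_C_mul (c : ℤ⟦X⟧) (P : ℕ → ℤ⟦X⟧) (k : ℕ) :
    pochSeries (fun m ↦ c * P m) k = C c * pochSeries P k := by
  rw [pochSeries, pochSeries, ← (summable_pochSeries P k).tsum_mul_left]
  refine tsum_congr fun m ↦ ?_
  rw [map_mul]
  ring

theorem pochSeries_zero_eq (P : ℕ → ℤ⟦X⟧) :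
    pochSeries P 0 = C (P 0) - X * pochSeries (fun m ↦ P (m + 1)) 1 := by
  rw [pochSeries, (summable_pochSeries P 0).tsum_eq_zero_add, pochSeries,
    ← (summable_pochSeries _ 1).tsum_mul_left, sub_eq_add_neg, ← tsum_neg]
  congr 1
  · simp [pochA]
  · refine tsum_congr fun m ↦ ?_
    rw [add_right_comm]
    ring

theorem pochSeries_succ (P : ℕ → ℤ⟦X⟧) (k : ℕ) :
    pochSeries P (k + 1) =
      pochSeries P k +
        X * C (X ^ (2 * k + 2)) * pochSeries (fun m ↦ X ^ (2 * m) * P m) (k + 1) := by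
  rw [pochSeries, pochSeries, pochSeries, ← (summable_pochSeries _ _).tsum_mul_left,
    ← (summable_pochSeries P k).tsum_add ((summable_pochSeries _ _).mul_left _)]
  refine tsum_congr fun m ↦ ?_
  rw [inverse_pochA_eq (m + k), ← add_assoc]
  simp only [map_mul, map_pow]
  ring

theorem rescale_pochSeries (P : ℕ → ℤ⟦X⟧) (k : ℕ) :
    rescale (X ^ 2) (pochSeries P k) =
      (1 - X * C (X ^ 2)) * pochSeries (fun m ↦ X ^ (2 * m) * P m) (k + 1) := by
  rw [pochSeries, ((summable_pochSeries P k).hasSum.rescale _).tsum_eq.symm, pochSeries,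
    ← (summable_pochSeries _ _).tsum_mul_left]
  refine tsum_congr fun m ↦ ?_
  rw [map_mul, map_mul, map_pow, map_neg, rescale_X, rescale_C, rescale_inverse_pochA_eq,
    ← add_assoc]
  simp only [map_mul, map_pow]
  ring

theorem coeff_pochSeries (P : ℕ → ℤ⟦X⟧) (k d : ℕ) :
    coeff d (pochSeries P k) =
      coeff d (∑ m ∈ range (d + 1), (-X) ^ m * (C (P m) * Ring.inverse (pochA (m + k)))) :=
  coeff_tsum_pow_mul (by simp) _ d

theorem one_add_pochSeries_oddBinomSum_eq :
    1 + pochSeries oddBinomSum 0 =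
      1 - X * C X * rescale (X ^ 2) (1 + pochSeries oddBinomSum 0) := by
  have hodd : pochSeries oddBinomSum 0 = -X * C X *
      (pochSeries evenBinomSum 1 + pochSeries (fun m ↦ X ^ (2 * m) * oddBinomSum m) 1) := by
    have h : (fun m ↦ oddBinomSum (m + 1)) =
        fun m ↦ X * (evenBinomSum m + X ^ (2 * m) * oddBinomSum m) :=
      funext fun m ↦ by rw [oddBinomSum_succ]; ring
    rw [pochSeries_zero_eq, h, pochSeries_C_mul, pochSeries_add, oddBinomSum_zero, map_zero]
    ring
  have heven : pochSeries evenBinomSum 0 = 1 - X * C (X ^ 2) *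
      (pochSeries (fun m ↦ X ^ (2 * m) * evenBinomSum m) 1 +
        pochSeries (fun m ↦ X ^ (2 * m) * oddBinomSum m) 1) := by
    have h : (fun m ↦ evenBinomSum (m + 1)) =
        fun m ↦ X ^ 2 * (X ^ (2 * m) * evenBinomSum m + X ^ (2 * m) * oddBinomSum m) :=
      funext fun m ↦ by rw [evenBinomSum_succ]; ring
    rw [pochSeries_zero_eq, h, pochSeries_C_mul, pochSeries_add, evenBinomSum_zero, map_one]
    ring
  have hshift := pochSeries_succ evenBinomSum 0
  have hres := rescale_pochSeries oddBinomSum 0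
  rw [mul_zero, zero_add] at hshift
  rw [map_add, map_one]
  -- `hshift` and `heven` turn the bracket in `hodd` into `1 + (1 - a q^2) R`, where `R` is the
  -- odd series at shift `1`; by `hres` this is `1 + F(a q^2)`.
  linear_combination hodd - X * C X * (hshift + heven - hres)

noncomputable def thetaSeries : Aq := ∑' n, (-X) ^ n * C (X ^ (n ^ 2))

theorem coeff_thetaSeries (d : ℕ) :
    coeff d thetaSeries = coeff d (∑ n ∈ range (d + 1), (-X) ^ n * C (X ^ (n ^ 2))) :=
  coeff_tsum_pow_mul (by simp) _ d

theorem thetaSeries_eq : thetaSeries = 1 - X * C X * rescale (X ^ 2) thetaSeries := by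
  have hs := summable_pow_mul (φ := (-X : Aq)) (by simp) fun n ↦ C (X ^ (n ^ 2))
  have hr := hs.hasSum.rescale (X ^ 2)
  rw [thetaSeries, ← hr.tsum_eq, ← hr.summable.tsum_mul_left, sub_eq_add_neg, ← tsum_neg]
  conv_lhs => rw [hs.tsum_eq_zero_add]
  congr 1
  · simp
  · refine tsum_congr fun n ↦ ?_
    simp only [map_mul, map_pow, map_neg, rescale_X, rescale_C]
    ring

theorem one_add_pochSeries_oddBinomSum_eq_thetaSeries :
    1 + pochSeries oddBinomSum 0 = thetaSeries := by
  rw [← sub_eq_zero]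
  refine eq_zero_of_eq_X_mul_C_mul_rescale (c := -X) (d := X ^ 2) ?_
  rw [map_sub, map_neg]
  linear_combination one_add_pochSeries_oddBinomSum_eq - thetaSeries_eq

theorem sum_range_ite_eq_oddBinomSum_term {m N : ℕ} (h : m ≤ N) :
    (∑ k ∈ range (N + 1),
      if 1 ≤ k ∧ 2 * k - 1 ≤ m then
        (-(X : Aq)) ^ m * C (X ^ ((m - k) ^ 2 + k ^ 2 + (m - k)) * gaussBinom m (2 * k - 1)) *
          Ring.inverse (pochA m)
      else 0) = (-X) ^ m * (C (oddBinomSum m) * Ring.inverse (pochA (m + 0))) := by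
  rw [oddBinomSum_eq_sum_range h, map_sum, sum_mul, mul_sum, sum_range_succ', if_neg (by omega),
    add_zero]
  refine sum_congr rfl fun k _ ↦ ?_
  split_ifs with hk
  · rw [show 2 * (k + 1) - 1 = 2 * k + 1 by omega, add_zero, mul_assoc]
  · rw [gaussBinom_of_lt (by omega), mul_zero, map_zero, zero_mul, mul_zero]

theorem sum_range_ite_one_le (N : ℕ) :
    (∑ n ∈ range (N + 1), if 1 ≤ n then (-(X : Aq)) ^ n * C (X ^ (n ^ 2)) else 0) = ∑ n ∈ range (N + 1), (-X) ^ n * C (X ^ (n ^ 2)) - 1 := by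
  rw [sum_range_succ', sum_range_succ', if_neg (by omega)]
  simp

/-- Andrews' identity with parameter `a` (Theorem, eq. (1.5)):
`∑_{m,k≥0} (-a)^m q^{(m-k)^2+k^2+m-k}/(aq^2;q^2)_m · [m choose 2k-1]_q
  = ∑_{n≥1} (-a)^n q^{n^2}` in `ℤ[[a,q]]`, where `[m choose 2k-1]_q = 0` if
`2k-1 < 0` or `2k-1 > m`.  Stated coefficientwise in `a`: the `(m,k)` summand
has `a`-order at least `m`, so the coefficient of `a^e` involves only `m ≤ e`. -/
theorem andrews_q9_param :
    ∀ e : ℕ,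
      PowerSeries.coeff (R := PowerSeries ℤ) e
        (∑ m ∈ Finset.range (e + 1), ∑ k ∈ Finset.range (e + 1),
          if 1 ≤ k ∧ 2 * k - 1 ≤ m then
            (-(PowerSeries.X : Aq)) ^ m *
              PowerSeries.C (R := PowerSeries ℤ)
                (PowerSeries.X ^ ((m - k) ^ 2 + k ^ 2 + (m - k)) * gaussBinom m (2 * k - 1)) *
              Ring.inverse (pochA m)
          else 0)
      =
      PowerSeries.coeff (R := PowerSeries ℤ) e
        (∑ n ∈ Finset.range (e + 1),
          if 1 ≤ n then
            (-(PowerSeries.X : Aq)) ^ n * PowerSeries.C (R := PowerSeries ℤ) (PowerSeries.X ^ (n ^ 2))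
          else 0) := by
  intro e
  rw [sum_congr rfl fun m hm ↦ sum_range_ite_eq_oddBinomSum_term (mem_range_succ_iff.mp hm),
    sum_range_ite_one_le, map_sub, ← coeff_pochSeries, ← coeff_thetaSeries,
    ← one_add_pochSeries_oddBinomSum_eq_thetaSeries, map_add, add_sub_cancel_left]
end

section
/- With F_n(a,q) defined as the signed weighted count ∑_{m,k≥0} (-1)^m a^n ∑_{(τ,λ,μ)∈P_{n,m,k}} q^{|τ|+|λ|+|μ|} (with P_{n,m,k} as for Andrews' Question 9), F_1(a,q) = -aq and consequently F_n(a,q) = (-a)^n q^{n^2} for all n ≥ 1. -/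
/-!
Write `[n, t]` for the Gaussian binomial in `q` and `(-q; q)_t = ∏_{i=1}^t (1 + q^i)`.
Reading `λ` and `μ` as partitions in a box, the generating function of `P_{n,m,k}` is
`q^τ [m, 2k-1]` times `q^{2(n-m)} [n-1, m-1]_{q^2}`. The upper Pascal rule pairs every odd
index `2k - 1` of row `m` with two consecutive indices of row `m - 1`, so the sum over `k` becomes
an instance of Cauchy's `q`-binomial theorem and equals `q^{m(m+1)/2} (-q; q)_{m-1}`. The sum
over `m` is then `-q^{2n-1} A_{n-1}` with `A_N = ∑_t (-1)^t q^{t(t-1)/2} (-q; q)_t [N, t]_{q^2}`.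
The partial sums of `A_{N+1} + q^{2N+1} A_N` have a closed form that vanishes at the last index;
so `A_{N+1} = -q^{2N+1} A_N`, which is the recursion `F_n = -a q^{2n-1} F_{n-1}`, and
`A_N = (-1)^N q^{N^2}`.
-/

open PowerSeries Finset

/-- The size of the one-part partition `τ = ((m-k)^2 + k^2 + m - k)`. -/
def tauP (m k : ℕ) : ℕ := (m - k) ^ 2 + k ^ 2 + (m - k)

/-- Number of partitions of `s` with at most `2k-1` parts, each part at most `m-2k+1`
(conditions read in `ℤ`, so this is `0` for `k = 0`). -/
noncomputable def lamCount (m k s : ℕ) : ℕ :=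
  Nat.card {p : Nat.Partition s //
    (p.parts.card : ℤ) ≤ 2 * k - 1 ∧ ∀ x ∈ p.parts, (x : ℤ) ≤ (m : ℤ) - 2 * k + 1}

/-- Number of partitions of `s` with exactly `n - m` parts (read in `ℤ`), all parts even
and at most `2m`. -/
noncomputable def muCount (n m s : ℕ) : ℕ :=
  Nat.card {p : Nat.Partition s //
    (p.parts.card : ℤ) = (n : ℤ) - m ∧ ∀ x ∈ p.parts, Even x ∧ x ≤ 2 * m}

/-- The generating function `∑_{(τ,λ,μ) ∈ P_{n,m,k}} q^{|τ|+|λ|+|μ|}` of the set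
`P_{n,m,k}` of triples `(τ,λ,μ)`: `τ` is the single part `(m-k)^2+k^2+m-k`, `λ` has at
most `2k-1` parts each at most `m-2k+1`, and `μ` has exactly `n-m` even parts each at most
`2m`; `P_{n,m,k} = ∅` when `m = k = 0`, `2k-1 > m` or `m > n` (the first and third
conditions are enforced by the `ℤ`-read conditions on `λ` and `μ`). -/
noncomputable def pgf (n m k : ℕ) : PowerSeries ℤ :=
  PowerSeries.mk fun d =>
    if 2 * (k : ℤ) - 1 ≤ m ∧ tauP m k ≤ d then
      ∑ s ∈ Finset.HasAntidiagonal.antidiagonal (d - tauP m k), (lamCount m k s.1 : ℤ) * muCount n m s.2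
    else 0

/-- `F_n(a,q) = ∑_{m,k≥0} (-1)^m a^n ∑_{(τ,λ,μ)∈P_{n,m,k}} q^{|τ|+|λ|+|μ|}` as an
element of `ℤ[[q]][[a]]`; all summands with `m > n` or `k > n` vanish. -/
noncomputable def Fgf (n : ℕ) : Aq :=
  (PowerSeries.X : Aq) ^ n *
    PowerSeries.C (R := PowerSeries ℤ)
      (∑ m ∈ Finset.range (n + 1), ∑ k ∈ Finset.range (n + 1),
        (-1 : PowerSeries ℤ) ^ m * pgf n m k)

lemma Nat.choose_two_succ (j : ℕ) : (j + 1).choose 2 = j.choose 2 + j := by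
  rw [Nat.choose_succ_succ', Nat.choose_one_right, add_comm]

lemma Nat.choose_two_two_mul_add_self (k : ℕ) : (2 * k).choose 2 + k = 2 * k * k := by
  induction k with
  | zero => rfl
  | succ k ih =>
    rw [show 2 * (k + 1) = 2 * k + 1 + 1 by ring, Nat.choose_two_succ, Nat.choose_two_succ]
    linarith

lemma tauP_succ_succ_of_odd_le {M k : ℕ} (h : 2 * k + 1 ≤ M) :
    tauP (M + 1) (k + 1) = 2 * M + 1 + (2 * k + 1).choose 2 + M * (M - (2 * k + 1)) := by
  obtain ⟨c, rfl⟩ := Nat.exists_eq_add_of_le h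
  have := Nat.choose_two_two_mul_add_self k
  rw [tauP, Nat.add_sub_add_right, Nat.add_sub_cancel_left, Nat.choose_two_succ,
    show 2 * k + 1 + c - k = k + 1 + c by omega]
  linarith

lemma tauP_succ_succ_add_of_even_le {M k : ℕ} (h : 2 * k ≤ M) :
    tauP (M + 1) (k + 1) + (M - 2 * k) = 2 * M + 1 + (2 * k).choose 2 + M * (M - 2 * k) := by
  obtain ⟨c, rfl⟩ := Nat.exists_eq_add_of_le h
  have := Nat.choose_two_two_mul_add_self k
  rw [tauP, Nat.add_sub_add_right, Nat.add_sub_cancel_left,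
    show 2 * k + c - k = k + c by omega]
  linarith

lemma Finset.sum_range_two_mul {M : Type*} [AddCommMonoid M] (f : ℕ → M) (N : ℕ) :
    ∑ i ∈ range (2 * N), f i = ∑ k ∈ range N, (f (2 * k) + f (2 * k + 1)) := by
  induction N with
  | zero => simp
  | succ N ih =>
    rw [mul_add, mul_one, sum_range_succ, sum_range_succ, sum_range_succ, ih, add_assoc]

lemma Nat.card_subtype_eq_card_and_add_card_and_not {α : Type*} [Finite α] (Q P : α → Prop) :
    Nat.card {x // Q x} = Nat.card {x // Q x ∧ P x} + Nat.card {x // Q x ∧ ¬P x} := by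
  classical
  rw [← Nat.card_congr (Equiv.sumCompl fun x : Subtype Q => P x), Nat.card_sum]
  exact congr_arg₂ _ (Nat.card_congr (Equiv.subtypeSubtypeEquivSubtypeInter Q P))
    (Nat.card_congr (Equiv.subtypeSubtypeEquivSubtypeInter Q (¬P ·)))

section GaussianBinomial

variable {R : Type*} [CommRing R]

def qBinom (x : R) : ℕ → ℕ → R
  | 0, 0 => 1
  | 0, _ + 1 => 0
  | _ + 1, 0 => 1
  | n + 1, t + 1 => qBinom x n t + x ^ (t + 1) * qBinom x n (t + 1)

variable (x : R)

@[simp] lemma qBinom_zero_right (n : ℕ) : qBinom x n 0 = 1 := by cases n <;> rfl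

lemma qBinom_succ_succ (n t : ℕ) :
    qBinom x (n + 1) (t + 1) = qBinom x n t + x ^ (t + 1) * qBinom x n (t + 1) := rfl

lemma qBinom_eq_zero_of_lt {n t : ℕ} (h : n < t) : qBinom x n t = 0 := by
  induction n generalizing t with
  | zero => obtain ⟨t, rfl⟩ := Nat.exists_eq_succ_of_ne_zero h.ne'; rfl
  | succ n ih =>
    obtain ⟨t, rfl⟩ := Nat.exists_eq_succ_of_ne_zero (by omega : t ≠ 0)
    rw [qBinom_succ_succ, ih (by omega), ih (by omega), mul_zero, add_zero]

@[simp] lemma qBinom_self (n : ℕ) : qBinom x n n = 1 := by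
  induction n with
  | zero => rfl
  | succ n ih =>
    rw [qBinom_succ_succ, ih, qBinom_eq_zero_of_lt x n.lt_succ_self, mul_zero, add_zero]

/-- Both sides vanish for `n ≤ t`. -/
lemma qBinom_absorb (n t : ℕ) :
    (1 - x ^ (t + 1)) * qBinom x n (t + 1) = (1 - x ^ (n - t)) * qBinom x n t := by
  induction n generalizing t with
  | zero => simp [qBinom_eq_zero_of_lt]
  | succ n ih =>
    cases t with
    | zero =>
      have := ih 0
      simp only [zero_add, pow_one, Nat.sub_zero, qBinom_zero_right, mul_one] at this ⊢
      rw [qBinom_succ_succ, qBinom_zero_right, pow_one]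
      linear_combination x * this
    | succ s =>
      rcases lt_or_ge s n with hs | hs
      · have e : x ^ (s + 2) * x ^ (n - (s + 1)) = x ^ (n + 1) := by
          rw [← pow_add]; congr 1; omega
        have e' : x ^ (s + 1) * x ^ (n - s) = x ^ (n + 1) := by
          rw [← pow_add]; congr 1; omega
        rw [qBinom_succ_succ, qBinom_succ_succ, Nat.add_sub_add_right]
        linear_combination x ^ (s + 2) * ih (s + 1) + ih s + qBinom x n (s + 1) * (e' - e)
      · rw [qBinom_eq_zero_of_lt x (by omega : n + 1 < s + 1 + 1),
          Nat.sub_eq_zero_of_le (by omega)]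
        ring

lemma qBinom_succ_succ' (n t : ℕ) :
    qBinom x (n + 1) (t + 1) = qBinom x n (t + 1) + x ^ (n - t) * qBinom x n t := by
  linear_combination qBinom_succ_succ x n t - qBinom_absorb x n t

lemma qBinom_symm {n t : ℕ} (h : t ≤ n) : qBinom x n (n - t) = qBinom x n t := by
  induction n generalizing t with
  | zero => obtain rfl := Nat.le_zero.mp h; rfl
  | succ n ih =>
    rcases t with _ | s
    · simp
    rcases h.eq_or_lt with h | h
    · obtain rfl : s = n := by omega
      simp
    rw [show n + 1 - (s + 1) = n - (s + 1) + 1 by omega, qBinom_succ_succ', qBinom_succ_succ,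
      show n - (n - (s + 1)) = s + 1 by omega, show n - (s + 1) + 1 = n - s by omega,
      ih (by omega), ih (by omega)]

lemma map_qBinom {S F : Type*} [CommRing S] [FunLike F R S] [RingHomClass F R S] (f : F)
    (n t : ℕ) :
    f (qBinom x n t) = qBinom (f x) n t := by
  induction n generalizing t with
  | zero => cases t <;> simp [qBinom]
  | succ n ih => cases t <;> simp [qBinom, ih]

open Finset.Nat in
/-- Cauchy's `q`-binomial theorem. -/
theorem prod_add_mul_pow_eq_sum_qBinom (y z : R) (n : ℕ) :
    ∏ i ∈ range n, (y + z * x ^ i) =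
      ∑ p ∈ antidiagonal n, x ^ p.1.choose 2 * qBinom x n p.1 * z ^ p.1 * y ^ p.2 := by
  induction n with
  | zero => simp
  | succ n ih =>
    set S := ∑ p ∈ antidiagonal n, x ^ p.1.choose 2 * qBinom x n p.1 * z ^ p.1 * y ^ p.2 with hS
    -- expand the sum over `antidiagonal (n + 1)` from either end
    have hy : y * S = y ^ (n + 1) + ∑ p ∈ antidiagonal n,
        x ^ (p.1 + 1).choose 2 * qBinom x n (p.1 + 1) * z ^ (p.1 + 1) * y ^ p.2 := by
      have h := (sum_antidiagonal_succ (f := fun p : ℕ × ℕ =>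
        x ^ p.1.choose 2 * qBinom x n p.1 * z ^ p.1 * y ^ p.2)).symm.trans
        (sum_antidiagonal_succ' (n := n))
      simp only [qBinom_eq_zero_of_lt x n.lt_succ_self, mul_zero, zero_mul, zero_add] at h
      simp only [Nat.choose_zero_succ, pow_zero, qBinom_zero_right, mul_one, one_mul] at h
      rw [h, hS, Finset.mul_sum]
      exact Finset.sum_congr rfl fun p _ => by ring
    have hz : z * x ^ n * S = ∑ p ∈ antidiagonal n,
        x ^ (p.1 + 1).choose 2 * (x ^ p.2 * qBinom x n p.1) * z ^ (p.1 + 1) * y ^ p.2 := by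
      rw [hS, Finset.mul_sum]
      refine Finset.sum_congr rfl fun p hp => ?_
      rw [← mem_antidiagonal.mp hp, Nat.choose_two_succ]
      ring
    rw [prod_range_succ, ih, sum_antidiagonal_succ]
    simp only [Nat.choose_zero_succ, pow_zero, qBinom_zero_right, mul_one, one_mul]
    have hsplit : ∀ p ∈ antidiagonal n,
        x ^ (p.1 + 1).choose 2 * qBinom x (n + 1) (p.1 + 1) * z ^ (p.1 + 1) * y ^ p.2 =
          x ^ (p.1 + 1).choose 2 * qBinom x n (p.1 + 1) * z ^ (p.1 + 1) * y ^ p.2 +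
          x ^ (p.1 + 1).choose 2 * (x ^ p.2 * qBinom x n p.1) * z ^ (p.1 + 1) * y ^ p.2 := by
      intro p hp
      rw [qBinom_succ_succ', ← mem_antidiagonal.mp hp, Nat.add_sub_cancel_left]
      ring
    rw [Finset.sum_congr rfl hsplit, Finset.sum_add_distrib]
    linear_combination hy + hz

lemma prod_pow_add_pow (M : ℕ) :
    ∏ i ∈ range M, (x ^ M + x ^ i) = x ^ M.choose 2 * ∏ i ∈ range M, (1 + x ^ (i + 1)) := by
  have h : ∀ i ∈ range M, x ^ M + x ^ (M - 1 - i) = x ^ (M - 1 - i) * (1 + x ^ (i + 1)) := by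
    intro i hi
    rw [mul_add, mul_one, ← pow_add, show M - 1 - i + (i + 1) = M by
      have := mem_range.mp hi; omega, add_comm]
  rw [← prod_range_reflect, prod_congr rfl h, prod_mul_distrib, prod_range_reflect (x ^ ·),
    prod_pow_eq_pow_sum, sum_range_id, Nat.choose_two_right]

open Finset.Nat in
/-- The upper Pascal rule splits `[M + 1, 2k + 1]` into the entries `2k` and `2k + 1` of row `M`,
with weights that turn the sum into Cauchy's theorem at `y = x ^ M`, `z = 1`. -/
theorem sum_pow_tauP_mul_qBinom_odd {M N : ℕ} (hMN : M < 2 * N) :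
    ∑ k ∈ range N, x ^ tauP (M + 1) (k + 1) * qBinom x (M + 1) (2 * k + 1) =
      x ^ (M + 2).choose 2 * ∏ i ∈ range M, (1 + x ^ (i + 1)) := by
  set g : ℕ → R := fun i =>
    x ^ (2 * M + 1) * (x ^ i.choose 2 * qBinom x M i * (x ^ M) ^ (M - i))
  have hodd (k : ℕ) : x ^ tauP (M + 1) (k + 1) * qBinom x M (2 * k + 1) = g (2 * k + 1) := by
    rcases lt_or_ge M (2 * k + 1) with h | h
    · simp [g, qBinom_eq_zero_of_lt x h]
    have e := congr_arg (x ^ ·) (tauP_succ_succ_of_odd_le h)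
    simp only [pow_add, pow_mul] at e
    linear_combination qBinom x M (2 * k + 1) * e
  have heven (k : ℕ) :
      x ^ tauP (M + 1) (k + 1) * (x ^ (M - 2 * k) * qBinom x M (2 * k)) = g (2 * k) := by
    rcases lt_or_ge M (2 * k) with h | h
    · simp [g, qBinom_eq_zero_of_lt x h]
    have e := congr_arg (x ^ ·) (tauP_succ_succ_add_of_even_le h)
    simp only [pow_add, pow_mul] at e
    linear_combination qBinom x M (2 * k) * e
  have hcauchy := prod_add_mul_pow_eq_sum_qBinom x (x ^ M) 1 M
  simp only [one_mul, one_pow, mul_one] at hcauchy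
  calc ∑ k ∈ range N, x ^ tauP (M + 1) (k + 1) * qBinom x (M + 1) (2 * k + 1)
      = ∑ k ∈ range N, (g (2 * k) + g (2 * k + 1)) := by
        refine sum_congr rfl fun k _ => ?_
        rw [qBinom_succ_succ', mul_add, hodd, heven, add_comm]
    _ = ∑ i ∈ range (M + 1), g i := by
        rw [← sum_range_two_mul]
        refine (sum_subset (range_subset_range.mpr (by omega)) fun i _ hi => ?_).symm
        simp [g, qBinom_eq_zero_of_lt x (show M < i by simpa using hi)]
    _ = x ^ (2 * M + 1) * ∏ i ∈ range M, (x ^ M + x ^ i) := by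
        rw [hcauchy, sum_antidiagonal_eq_sum_range_succ (fun i j => x ^ i.choose 2 *
          qBinom x M i * (x ^ M) ^ j), mul_sum]
    _ = x ^ (M + 2).choose 2 * ∏ i ∈ range M, (1 + x ^ (i + 1)) := by
        rw [prod_pow_add_pow, ← mul_assoc, ← pow_add, Nat.choose_two_succ,
          Nat.choose_two_succ]
        ring_nf

theorem sum_range_alternating_qBinom_sq_partial (N s : ℕ) :
    ∑ t ∈ range (s + 1), (-1) ^ t * x ^ t.choose 2 * (∏ i ∈ range t, (1 + x ^ (i + 1))) *
        qBinom (x ^ 2) (N + 1) t +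
      x ^ (2 * N + 1) * ∑ t ∈ range (s + 1), (-1) ^ t * x ^ t.choose 2 *
        (∏ i ∈ range t, (1 + x ^ (i + 1))) * qBinom (x ^ 2) N t =
      (-1) ^ s * (x ^ (s + 1).choose 2 + x ^ (s.choose 2 + (2 * N + 1))) *
        (∏ i ∈ range s, (1 + x ^ (i + 1))) * qBinom (x ^ 2) N s := by
  induction s with
  | zero => simp
  | succ s ih =>
    rw [sum_range_succ _ (s + 1), sum_range_succ _ (s + 1), qBinom_succ_succ, prod_range_succ,
      Nat.choose_two_succ (s + 1), Nat.choose_two_succ s]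
    rw [Nat.choose_two_succ s] at ih
    rcases le_or_gt s N with hs | hs
    · have e : x * x ^ s * x ^ s * (x ^ 2) ^ (N - s) = x ^ (2 * N + 1) := by
        rw [← pow_mul, ← pow_succ', ← pow_add, ← pow_add]; congr 1; omega
      linear_combination ih + (-1) ^ s * x ^ s.choose 2 * (∏ i ∈ range s, (1 + x ^ (i + 1))) *
        (x * x ^ s * x ^ s * qBinom_absorb (x ^ 2) N s - qBinom (x ^ 2) N s * e)
    · simp [ih, qBinom_eq_zero_of_lt _ hs, qBinom_eq_zero_of_lt _ (Nat.lt_succ_of_lt hs)]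

theorem sum_range_alternating_qBinom_sq (N : ℕ) :
    ∑ t ∈ range (N + 1), (-1) ^ t * x ^ t.choose 2 * (∏ i ∈ range t, (1 + x ^ (i + 1))) *
      qBinom (x ^ 2) N t = (-1) ^ N * x ^ (N ^ 2) := by
  induction N with
  | zero => simp
  | succ N ih =>
    have h := sum_range_alternating_qBinom_sq_partial x N (N + 1)
    simp only [sum_range_succ _ (N + 1), qBinom_eq_zero_of_lt _ N.lt_succ_self, mul_zero,
      add_zero, ih] at h ⊢
    linear_combination h

end GaussianBinomial

noncomputable def boxCount (a b s : ℕ) : ℕ :=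
  Nat.card {p : s.Partition // p.parts.card ≤ a ∧ ∀ x ∈ p.parts, x ≤ b}

lemma boxCount_zero (a b : ℕ) : boxCount a b 0 = 1 := by
  rw [boxCount, Nat.card_eq_one_iff_exists]
  exact ⟨⟨default, by simp⟩, fun p => Subtype.ext (Subsingleton.elim _ _)⟩

lemma boxCount_succ_of_eq_zero {a b : ℕ} (h : a = 0 ∨ b = 0) (s : ℕ) :
    boxCount a b (s + 1) = 0 := by
  rw [boxCount, Nat.card_eq_zero]
  refine Or.inl ⟨fun ⟨p, hcard, hle⟩ => ?_⟩
  have hp : p.parts = 0 := by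
    rcases h with rfl | rfl
    · exact Multiset.card_eq_zero.mp (Nat.le_zero.mp hcard)
    · exact Multiset.eq_zero_of_forall_notMem fun x hx =>
        (p.parts_pos hx).ne' (Nat.le_zero.mp (hle x hx))
  simpa [hp] using p.parts_sum

lemma boxCount_succ_succ (a b s : ℕ) :
    boxCount (a + 1) (b + 1) s =
      boxCount (a + 1) b s + if b + 1 ≤ s then boxCount a (b + 1) (s - (b + 1)) else 0 := by
  rw [boxCount, Nat.card_subtype_eq_card_and_add_card_and_not _ (b + 1 ∉ ·.parts)]
  congr 1
  · refine Nat.card_congr (Equiv.subtypeEquivRight fun p => ?_)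
    refine ⟨fun ⟨⟨hcard, hle⟩, hb⟩ => ⟨hcard, fun x hx => ?_⟩,
      fun ⟨hcard, hle⟩ =>
        ⟨⟨hcard, fun x hx => (hle x hx).trans b.le_succ⟩, fun hb => ?_⟩⟩
    · exact Nat.le_of_lt_succ ((hle x hx).lt_of_ne fun h => hb (h ▸ hx))
    · exact absurd (hle _ hb) (Nat.not_succ_le_self b)
  · simp only [not_not]
    split_ifs with hbs
    · let e := Nat.Partition.partitionWithPartEquiv b.succ_pos hbs
      refine Nat.card_congr ((Equiv.subtypeEquivRight fun _ => and_comm).trans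
        ((Equiv.subtypeSubtypeEquivSubtypeInter (b + 1 ∈ ·.parts : s.Partition → Prop) _).symm
          |>.trans (Equiv.subtypeEquiv e.symm fun q => ?_).symm))
      simp [e]
    · rw [Nat.card_eq_zero]
      exact Or.inl ⟨fun ⟨p, _, hb⟩ => hbs (Nat.Partition.le_of_mem_parts hb)⟩

theorem mk_boxCount (a b : ℕ) :
    PowerSeries.mk (fun s => (boxCount a b s : ℤ)) = qBinom (X : PowerSeries ℤ) (a + b) b := by
  have base {a b : ℕ} (h : a = 0 ∨ b = 0) :
      PowerSeries.mk (fun s => (boxCount a b s : ℤ)) = 1 := by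
    ext (_ | s) <;> simp [boxCount_zero, boxCount_succ_of_eq_zero h, coeff_one]
  induction a generalizing b with
  | zero => rw [base (Or.inl rfl), zero_add, qBinom_self]
  | succ a iha =>
    induction b with
    | zero => rw [base (Or.inr rfl), qBinom_zero_right]
    | succ b ihb =>
      have hrec : PowerSeries.mk (fun s => (boxCount (a + 1) (b + 1) s : ℤ)) =
          PowerSeries.mk (fun s => (boxCount (a + 1) b s : ℤ)) +
            X ^ (b + 1) * PowerSeries.mk (fun s => (boxCount a (b + 1) s : ℤ)) := by
        ext s
        simp only [coeff_mk, map_add, coeff_X_pow_mul', boxCount_succ_succ]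
        split_ifs <;> simp
      rw [hrec, ihb, iha, show a + 1 + (b + 1) = a + 1 + b + 1 by ring, qBinom_succ_succ,
        show a + (b + 1) = a + 1 + b by ring]

lemma lamCount_zero_right (m s : ℕ) : lamCount m 0 s = 0 := by
  rw [lamCount, Nat.card_eq_zero]
  exact Or.inl ⟨fun ⟨p, hcard, _⟩ => by push_cast at hcard; omega⟩

lemma lamCount_succ {m j : ℕ} (h : 2 * j + 1 ≤ m) (s : ℕ) :
    lamCount m (j + 1) s = boxCount (2 * j + 1) (m - (2 * j + 1)) s := by
  refine Nat.card_congr (Equiv.subtypeEquivRight fun p => ?_)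
  refine and_congr (by push_cast; omega) (forall₂_congr fun x _ => ?_)
  push_cast
  omega

theorem mk_lamCount_succ {m j : ℕ} (h : 2 * j + 1 ≤ m) :
    PowerSeries.mk (fun s => (lamCount m (j + 1) s : ℤ)) = qBinom X m (2 * j + 1) := by
  simp only [lamCount_succ h, mk_boxCount, Nat.add_sub_cancel' h, qBinom_symm _ h]

noncomputable def exactCount (r c s : ℕ) : ℕ :=
  Nat.card {p : s.Partition // p.parts.card = r ∧ ∀ x ∈ p.parts, x ≤ c}

lemma boxCount_succ_left (r c s : ℕ) :
    boxCount (r + 1) c s = boxCount r c s + exactCount (r + 1) c s := by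
  rw [boxCount, Nat.card_subtype_eq_card_and_add_card_and_not _ (·.parts.card ≤ r)]
  congr 1 <;> refine Nat.card_congr (Equiv.subtypeEquivRight fun p => ?_)
  · exact ⟨fun ⟨⟨_, hle⟩, hcard⟩ => ⟨hcard, hle⟩,
      fun ⟨hcard, hle⟩ => ⟨⟨by omega, hle⟩, hcard⟩⟩
  · exact ⟨fun ⟨⟨hcard, hle⟩, hr⟩ => ⟨by omega, hle⟩,
      fun ⟨hcard, hle⟩ => ⟨⟨by omega, hle⟩, by omega⟩⟩

theorem mk_exactCount (r c : ℕ) :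
    PowerSeries.mk (fun s => (exactCount r (c + 1) s : ℤ)) = X ^ r * qBinom X (r + c) c := by
  cases r with
  | zero =>
    have h (s : ℕ) : exactCount 0 (c + 1) s = boxCount 0 (c + 1) s :=
      Nat.card_congr (Equiv.subtypeEquivRight fun p => by rw [Nat.le_zero])
    simp only [h, mk_boxCount, qBinom_self, pow_zero, one_mul, zero_add]
  | succ r =>
    have h (s : ℕ) : (exactCount (r + 1) (c + 1) s : ℤ) =
        boxCount (r + 1) (c + 1) s - boxCount r (c + 1) s := by
      rw [boxCount_succ_left]; push_cast; ring
    have hsub : PowerSeries.mk (fun s => (exactCount (r + 1) (c + 1) s : ℤ)) =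
        PowerSeries.mk (fun s => (boxCount (r + 1) (c + 1) s : ℤ)) -
          PowerSeries.mk (fun s => (boxCount r (c + 1) s : ℤ)) := by
      ext s; simp [h]
    rw [hsub, mk_boxCount, mk_boxCount, show r + 1 + (c + 1) = r + 1 + c + 1 by ring,
      qBinom_succ_succ', show r + 1 + c - c = r + 1 by omega, show r + (c + 1) = r + 1 + c by ring]
    ring

def Nat.Partition.doubleEquiv (d : ℕ) :
    d.Partition ≃ {p : (2 * d).Partition // ∀ x ∈ p.parts, Even x} where
  toFun q := ⟨⟨q.parts.map (2 * ·), by simpa using fun _ => q.parts_pos,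
    by rw [Multiset.sum_map_mul_left, Multiset.map_id', q.parts_sum]⟩, by simp⟩
  invFun p := ⟨p.1.parts.map (· / 2), fun {i} hi => by
      obtain ⟨x, hx, rfl⟩ := Multiset.mem_map.mp hi
      obtain ⟨y, rfl⟩ := p.2 x hx
      have := p.1.parts_pos hx
      omega,
    by
      have h : p.1.parts.map (fun x => 2 * (x / 2)) = p.1.parts.map id :=
        Multiset.map_congr rfl fun x hx => Nat.two_mul_div_two_of_even (p.2 x hx)
      have := congr_arg Multiset.sum h
      rw [Multiset.sum_map_mul_left, Multiset.map_id, p.1.parts_sum] at this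
      omega⟩
  left_inv q := by ext1; simp [Multiset.map_map]
  right_inv p := by
    ext1; ext1
    simp only [Multiset.map_map, Function.comp_def]
    exact (Multiset.map_congr rfl fun x hx => Nat.two_mul_div_two_of_even (p.2 x hx)).trans
      (Multiset.map_id _)

lemma muCount_two_mul {n m : ℕ} (hmn : m ≤ n) (d : ℕ) :
    muCount n m (2 * d) = exactCount (n - m) m d := by
  refine Nat.card_congr ((Equiv.subtypeSubtypeEquivSubtype fun h x hx => (h.2 x hx).1).symm.trans
    (Equiv.subtypeEquiv (Nat.Partition.doubleEquiv d) fun q => ?_).symm)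
  simp [Nat.Partition.doubleEquiv]
  omega

lemma muCount_eq_zero_of_not_two_dvd {n m s : ℕ} (hs : ¬2 ∣ s) : muCount n m s = 0 := by
  rw [muCount, Nat.card_eq_zero]
  refine Or.inl ⟨fun ⟨p, _, hp⟩ => hs ?_⟩
  rw [← p.parts_sum]
  exact Multiset.dvd_sum fun x hx => even_iff_two_dvd.mp (hp x hx).1

theorem mk_muCount_succ {N t : ℕ} (h : t ≤ N) :
    PowerSeries.mk (fun s => (muCount (N + 1) (t + 1) s : ℤ)) =
      X ^ (2 * (N - t)) * qBinom (X ^ 2) N t := by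
  have hexp : PowerSeries.mk (fun s => (muCount (N + 1) (t + 1) s : ℤ)) =
      expand 2 two_ne_zero (PowerSeries.mk fun s => (exactCount (N - t) (t + 1) s : ℤ)) := by
    ext s
    rw [coeff_expand, coeff_mk]
    split_ifs with hs
    · obtain ⟨d, rfl⟩ := hs
      rw [muCount_two_mul (by omega), Nat.mul_div_cancel_left d two_pos, coeff_mk,
        Nat.add_sub_add_right]
    · rw [muCount_eq_zero_of_not_two_dvd hs, Nat.cast_zero]
  rw [hexp, mk_exactCount, Nat.sub_add_cancel h, map_mul, map_pow, expand_X, map_qBinom,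
    expand_X, pow_mul]

lemma pgf_zero_right (n m : ℕ) : pgf n m 0 = 0 := by
  ext d
  simp [pgf, lamCount_zero_right]

lemma pgf_succ (n m j : ℕ) :
    pgf n m (j + 1) = X ^ tauP m (j + 1) * qBinom X m (2 * j + 1) *
      PowerSeries.mk (fun s => (muCount n m s : ℤ)) := by
  rcases le_or_gt (2 * j + 1) m with h | h
  · ext d
    rw [pgf, coeff_mk, ← mk_lamCount_succ h, mul_assoc, coeff_X_pow_mul', coeff_mul]
    have hk : 2 * ((j + 1 : ℕ) : ℤ) - 1 ≤ m := by push_cast; omega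
    simp only [coeff_mk, hk, true_and]
  · ext d
    rw [qBinom_eq_zero_of_lt _ h, pgf, coeff_mk, if_neg (by push_cast; omega)]
    simp

lemma sum_pgf_succ {N t : ℕ} (h : t ≤ N) :
    ∑ k ∈ range (N + 2), pgf (N + 1) (t + 1) k = X ^ (2 * N + 1) *
      (X ^ t.choose 2 * (∏ i ∈ range t, (1 + X ^ (i + 1))) * qBinom (X ^ 2) N t) := by
  simp only [sum_range_succ' _ (N + 1), pgf_zero_right, add_zero, pgf_succ, ← sum_mul,
    sum_pow_tauP_mul_qBinom_odd X (show t < 2 * (N + 1) by omega), mk_muCount_succ h]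
  rw [Nat.choose_two_succ, Nat.choose_two_succ]
  have e : X ^ (2 * (N - t)) * X ^ (t + t + 1) = (X : PowerSeries ℤ) ^ (2 * N + 1) := by
    rw [← pow_add]; congr 1; omega
  linear_combination
    X ^ t.choose 2 * (∏ i ∈ range t, (1 + X ^ (i + 1))) * qBinom (X ^ 2) N t * e

theorem sum_sum_pgf {n : ℕ} (hn : 1 ≤ n) :
    ∑ m ∈ range (n + 1), ∑ k ∈ range (n + 1), (-1 : PowerSeries ℤ) ^ m * pgf n m k =
      (-1) ^ n * X ^ (n ^ 2) := by
  obtain ⟨N, rfl⟩ := Nat.exists_eq_add_of_le' hn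
  have hm0 : ∑ k ∈ range (N + 2), pgf (N + 1) 0 k = 0 :=
    sum_eq_zero fun k _ => by
      cases k <;> simp [pgf_zero_right, pgf_succ, qBinom_eq_zero_of_lt]
  simp only [← mul_sum]
  rw [sum_range_succ', hm0, mul_zero, add_zero]
  calc ∑ t ∈ range (N + 1), (-1) ^ (t + 1) * ∑ k ∈ range (N + 2), pgf (N + 1) (t + 1) k
      = -X ^ (2 * N + 1) * ∑ t ∈ range (N + 1), (-1) ^ t * X ^ t.choose 2 *
          (∏ i ∈ range t, (1 + X ^ (i + 1))) * qBinom (X ^ 2) N t := by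
        rw [mul_sum]
        refine sum_congr rfl fun t ht => ?_
        rw [sum_pgf_succ (Nat.lt_succ_iff.mp (mem_range.mp ht))]
        ring
    _ = (-1) ^ (N + 1) * X ^ ((N + 1) ^ 2) := by
        rw [sum_range_alternating_qBinom_sq]
        ring

/-- `F_1(a,q) = -aq`, and consequently `F_n(a,q) = (-a)^n q^{n^2}` for all `n ≥ 1`. -/
theorem Fgf_one_and_closed_form :
    Fgf 1 = -(PowerSeries.X : Aq) * PowerSeries.C (R := PowerSeries ℤ) PowerSeries.X ∧
    ∀ n : ℕ, 1 ≤ n →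
      Fgf n =
        (-(PowerSeries.X : Aq)) ^ n *
          PowerSeries.C (R := PowerSeries ℤ) (PowerSeries.X ^ (n ^ 2)) := by
  have closed (n : ℕ) (hn : 1 ≤ n) :
      Fgf n = (-(PowerSeries.X : Aq)) ^ n *
        PowerSeries.C (R := PowerSeries ℤ) (PowerSeries.X ^ (n ^ 2)) := by
    rw [Fgf, sum_sum_pgf hn, map_mul, map_pow, map_pow, map_neg, map_one, neg_pow]
    ring
  exact ⟨by simpa using closed 1 le_rfl, closed⟩
end

section
/- For fixed n ≥ 1, the total signed weight identity from the bijection telescopes: ∑_{m,k≥0} (-1)^m [ p_{n,m,k}(q) + q^{2n-1} p_{n-1,m,k}(q) ] = ∑_{m,k≥0} (-1)^m [ γ_{n,m,k}(q) + η_{n,m,k}(q) + κ_{n,m,k}(q) ] + ∑_{m,k≥0} (-1)^m [ γ_{n,m+1,k}(q) + η_{n,m+1,k}(q) + κ_{n,m+1,k+1}(q) ], and since consecutive m-terms carry opposite signs, ∑_{m,k≥0} (-1)^m p_{n,m,k}(q) = -q^{2n-1} ∑_{m,k≥0} (-1)^m p_{n-1,m,k}(q). -/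
open PowerSeries Finset

/-- Generating function of `G_{n,m,k} = {(τ,λ,μ) ∈ P_{n,m,k} : ℓ(λ) = 2k-1, 2 ∉ μ}`. -/
noncomputable def ggf (n m k : ℕ) : PowerSeries ℤ :=
  PowerSeries.mk fun d =>
    if 2 * (k : ℤ) - 1 ≤ m ∧ tauP m k ≤ d then
      ∑ s ∈ Finset.HasAntidiagonal.antidiagonal (d - tauP m k),
        (Nat.card {p : Nat.Partition s.1 //
            (p.parts.card : ℤ) = 2 * k - 1 ∧ ∀ x ∈ p.parts, (x : ℤ) ≤ (m : ℤ) - 2 * k + 1} : ℤ) *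
        (Nat.card {p : Nat.Partition s.2 //
            ((p.parts.card : ℤ) = (n : ℤ) - m ∧ ∀ x ∈ p.parts, Even x ∧ x ≤ 2 * m) ∧
              2 ∉ p.parts} : ℤ)
    else 0

/-- Generating function of `H_{n,m,k} = {(τ,λ,μ) ∈ P_{n,m,k} : ℓ(λ) = 2k-2, 2m ∉ μ}`. -/
noncomputable def hgf (n m k : ℕ) : PowerSeries ℤ :=
  PowerSeries.mk fun d =>
    if 2 * (k : ℤ) - 1 ≤ m ∧ tauP m k ≤ d then
      ∑ s ∈ Finset.HasAntidiagonal.antidiagonal (d - tauP m k),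
        (Nat.card {p : Nat.Partition s.1 //
            (p.parts.card : ℤ) = 2 * k - 2 ∧ ∀ x ∈ p.parts, (x : ℤ) ≤ (m : ℤ) - 2 * k + 1} : ℤ) *
        (Nat.card {p : Nat.Partition s.2 //
            ((p.parts.card : ℤ) = (n : ℤ) - m ∧ ∀ x ∈ p.parts, Even x ∧ x ≤ 2 * m) ∧
              2 * m ∉ p.parts} : ℤ)
    else 0

/-- Generating function of `K_{n,m,k} = {(τ,λ,μ) ∈ P_{n,m,k} : ℓ(λ) ≤ 2k-3, 2m ∉ μ}`. -/
noncomputable def kgf (n m k : ℕ) : PowerSeries ℤ :=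
  PowerSeries.mk fun d =>
    if 2 * (k : ℤ) - 1 ≤ m ∧ tauP m k ≤ d then
      ∑ s ∈ Finset.HasAntidiagonal.antidiagonal (d - tauP m k),
        (Nat.card {p : Nat.Partition s.1 //
            (p.parts.card : ℤ) ≤ 2 * k - 3 ∧ ∀ x ∈ p.parts, (x : ℤ) ≤ (m : ℤ) - 2 * k + 1} : ℤ) *
        (Nat.card {p : Nat.Partition s.2 //
            ((p.parts.card : ℤ) = (n : ℤ) - m ∧ ∀ x ∈ p.parts, Even x ∧ x ≤ 2 * m) ∧
              2 * m ∉ p.parts} : ℤ)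
    else 0


/-! Summing the relation against `(-1)^m`, the term `κ_{n,m+1,k}` on the left cancels the
shifted term `κ_{n,m+1,k+1}` on the right after reindexing in `k`, because `κ_{n,m,k}` vanishes
at `k = 0` and for `k > n`. With `R_m = ∑_k (γ_{n,m,k} + η_{n,m,k} + κ_{n,m,k})` (`ghkRowSum`),
the right-hand side becomes `∑_m (-1)^m (R_m + R_{m+1}) = R_0 - (-1)^{n+2} R_{n+2}`, and both
ends vanish: there is no admissible `λ` when `m = 0`, and no admissible `μ` (it would need
`n - m < 0` parts) when `m > n`. -/

theorem Finset.sum_range_succ_eq_sum_range_of_eq_zero {M : Type*} [AddCommMonoid M]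
    {f : ℕ → M} {N : ℕ} (h0 : f 0 = 0) (hN : f N = 0) :
    ∑ k ∈ range N, f (k + 1) = ∑ k ∈ range N, f k := by
  have h := (sum_range_succ' f N).symm.trans (sum_range_succ f N)
  rwa [h0, hN, add_zero, add_zero] at h

theorem Finset.sum_range_neg_one_pow_mul_add_succ {R : Type*} [CommRing R] (f : ℕ → R)
    (N : ℕ) :
    ∑ m ∈ range N, (-1) ^ m * (f m + f (m + 1)) = f 0 - (-1) ^ N * f N := by
  have h := sum_range_sub' (fun m => (-1) ^ m * f m) N
  rw [pow_zero, one_mul] at h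
  rw [← h]
  refine sum_congr rfl fun m _ => ?_
  ring

theorem PowerSeries.mk_ite_sum_antidiagonal_eq_zero {c : Prop} [Decidable c] {t : ℕ}
    {f : ℕ × ℕ → ℤ} (hf : c → ∀ s, f s = 0) :
    mk (fun d => if c ∧ t ≤ d then ∑ s ∈ antidiagonal (d - t), f s else 0) = 0 := by
  ext d
  rw [coeff_mk, map_zero]
  split_ifs with hc
  · exact sum_eq_zero fun s _ => hf hc.1 s
  · rfl

theorem Nat.card_subtype_eq_zero {α : Type*} {P : α → Prop} (h : ∀ a, ¬P a) :
    Nat.card {a // P a} = 0 := by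
  simp [h]

section Vanishing

variable {n m k : ℕ}

theorem ggf_eq_zero_of_lt (hm : n < m) : ggf n m k = 0 :=
  mk_ite_sum_antidiagonal_eq_zero fun _ _ => mul_eq_zero_of_right _ <| Nat.cast_eq_zero.mpr <|
    Nat.card_subtype_eq_zero fun _ hp => by have := hp.1.1; omega

theorem hgf_eq_zero_of_lt (hm : n < m) : hgf n m k = 0 :=
  mk_ite_sum_antidiagonal_eq_zero fun _ _ => mul_eq_zero_of_right _ <| Nat.cast_eq_zero.mpr <|
    Nat.card_subtype_eq_zero fun _ hp => by have := hp.1.1; omega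

theorem kgf_eq_zero_of_lt (hm : n < m) : kgf n m k = 0 :=
  mk_ite_sum_antidiagonal_eq_zero fun _ _ => mul_eq_zero_of_right _ <| Nat.cast_eq_zero.mpr <|
    Nat.card_subtype_eq_zero fun _ hp => by have := hp.1.1; omega

theorem kgf_eq_zero_of_lt_right (hk : n < k) : kgf n m k = 0 :=
  mk_ite_sum_antidiagonal_eq_zero fun hc _ => mul_eq_zero_of_right _ <| Nat.cast_eq_zero.mpr <|
    Nat.card_subtype_eq_zero fun _ hp => by have := hp.1.1; omega

theorem kgf_zero_right : kgf n m 0 = 0 :=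
  mk_ite_sum_antidiagonal_eq_zero fun _ _ => mul_eq_zero_of_left (Nat.cast_eq_zero.mpr <|
    Nat.card_subtype_eq_zero fun _ hp => by have := hp.1; omega) _

theorem ggf_zero_middle : ggf n 0 k = 0 :=
  mk_ite_sum_antidiagonal_eq_zero fun hc _ => mul_eq_zero_of_left (Nat.cast_eq_zero.mpr <|
    Nat.card_subtype_eq_zero fun _ hp => by have := hp.1; push_cast at hc; omega) _

theorem hgf_zero_middle : hgf n 0 k = 0 :=
  mk_ite_sum_antidiagonal_eq_zero fun hc _ => mul_eq_zero_of_left (Nat.cast_eq_zero.mpr <|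
    Nat.card_subtype_eq_zero fun _ hp => by have := hp.1; push_cast at hc; omega) _

theorem kgf_zero_middle : kgf n 0 k = 0 :=
  mk_ite_sum_antidiagonal_eq_zero fun hc _ => mul_eq_zero_of_left (Nat.cast_eq_zero.mpr <|
    Nat.card_subtype_eq_zero fun _ hp => by have := hp.1; push_cast at hc; omega) _

end Vanishing

noncomputable def ghkRowSum (n m : ℕ) : PowerSeries ℤ :=
  ∑ k ∈ range (n + 2), (ggf n m k + hgf n m k + kgf n m k)

theorem ghkRowSum_zero_right (n : ℕ) : ghkRowSum n 0 = 0 :=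
  sum_eq_zero fun _ _ => by
    rw [ggf_zero_middle, hgf_zero_middle, kgf_zero_middle, add_zero, add_zero]

theorem ghkRowSum_eq_zero_of_lt {n m : ℕ} (hm : n < m) : ghkRowSum n m = 0 :=
  sum_eq_zero fun _ _ => by
    rw [ggf_eq_zero_of_lt hm, hgf_eq_zero_of_lt hm, kgf_eq_zero_of_lt hm, add_zero, add_zero]

theorem sum_range_kgf_succ_eq_ghkRowSum (n m : ℕ) :
    ∑ k ∈ range (n + 2), (ggf n m k + hgf n m k + kgf n m (k + 1)) = ghkRowSum n m := by
  simp only [ghkRowSum, sum_add_distrib]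
  rw [sum_range_succ_eq_sum_range_of_eq_zero kgf_zero_right (kgf_eq_zero_of_lt_right (by omega))]

theorem alternating_sum_ghk_add_shift_eq_zero (n : ℕ) :
    (∑ m ∈ range (n + 2), ∑ k ∈ range (n + 2),
        (-1 : PowerSeries ℤ) ^ m * (ggf n m k + hgf n m k + kgf n m k)) +
      (∑ m ∈ range (n + 2), ∑ k ∈ range (n + 2),
        (-1 : PowerSeries ℤ) ^ m *
          (ggf n (m + 1) k + hgf n (m + 1) k + kgf n (m + 1) (k + 1))) = 0 := by
  simp only [← mul_sum, sum_range_kgf_succ_eq_ghkRowSum, ← ghkRowSum.eq_1, ← sum_add_distrib,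
    ← mul_add]
  rw [sum_range_neg_one_pow_mul_add_succ (ghkRowSum n), ghkRowSum_zero_right,
    ghkRowSum_eq_zero_of_lt (by omega), mul_zero, sub_zero]

theorem telescoped_sum_P_general (n : ℕ)
    (h : ∀ m k : ℕ,
      pgf n m k + PowerSeries.X ^ (2 * n - 1) * pgf (n - 1) m k + kgf n (m + 1) k =
        ggf n m k + ggf n (m + 1) k + hgf n m k + hgf n (m + 1) k +
          kgf n m k + kgf n (m + 1) (k + 1) + kgf n (m + 1) k) :
    (∑ m ∈ Finset.range (n + 2), ∑ k ∈ Finset.range (n + 2),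
        (-1 : PowerSeries ℤ) ^ m *
          (pgf n m k + PowerSeries.X ^ (2 * n - 1) * pgf (n - 1) m k) =
      (∑ m ∈ Finset.range (n + 2), ∑ k ∈ Finset.range (n + 2),
        (-1 : PowerSeries ℤ) ^ m * (ggf n m k + hgf n m k + kgf n m k)) +
      (∑ m ∈ Finset.range (n + 2), ∑ k ∈ Finset.range (n + 2),
        (-1 : PowerSeries ℤ) ^ m *
          (ggf n (m + 1) k + hgf n (m + 1) k + kgf n (m + 1) (k + 1)))) ∧
    (∑ m ∈ Finset.range (n + 2), ∑ k ∈ Finset.range (n + 2),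
        (-1 : PowerSeries ℤ) ^ m * pgf n m k =
      -(PowerSeries.X ^ (2 * n - 1)) *
        ∑ m ∈ Finset.range (n + 2), ∑ k ∈ Finset.range (n + 2),
          (-1 : PowerSeries ℤ) ^ m * pgf (n - 1) m k) := by
  have hrow : ∀ m k : ℕ, pgf n m k + X ^ (2 * n - 1) * pgf (n - 1) m k =
      (ggf n m k + hgf n m k + kgf n m k) +
        (ggf n (m + 1) k + hgf n (m + 1) k + kgf n (m + 1) (k + 1)) :=
    fun m k => by linear_combination h m k
  refine (and_iff_left_of_imp fun hsplit => ?_).mpr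
    (by simp only [hrow, mul_add, sum_add_distrib])
  have hzero := hsplit.trans (alternating_sum_ghk_add_shift_eq_zero n)
  simp only [mul_add, sum_add_distrib, mul_left_comm _ (X ^ (2 * n - 1)), ← mul_sum] at hzero ⊢
  linear_combination hzero

/-- Given the combinatorial telescoping relation, the signed sums telescope: summing
`(-1)^m` times the relation over all `m, k ≥ 0` (all terms with `m > n+1` or `k > n+1`
vanish, so the sums below are complete), the `κ`-terms cancel and the shifted `m+1`-sums
carry the opposite sign, yielding
`∑_{m,k} (-1)^m p_{n,m,k} = -q^{2n-1} ∑_{m,k} (-1)^m p_{n-1,m,k}`. -/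
theorem telescoped_sum_P (n : ℕ) (hn : 1 ≤ n)
    (h : ∀ m k : ℕ,
      pgf n m k + PowerSeries.X ^ (2 * n - 1) * pgf (n - 1) m k + kgf n (m + 1) k =
        ggf n m k + ggf n (m + 1) k + hgf n m k + hgf n (m + 1) k +
          kgf n m k + kgf n (m + 1) (k + 1) + kgf n (m + 1) k) :
    (∑ m ∈ Finset.range (n + 2), ∑ k ∈ Finset.range (n + 2),
        (-1 : PowerSeries ℤ) ^ m *
          (pgf n m k + PowerSeries.X ^ (2 * n - 1) * pgf (n - 1) m k) =
      (∑ m ∈ Finset.range (n + 2), ∑ k ∈ Finset.range (n + 2),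
        (-1 : PowerSeries ℤ) ^ m * (ggf n m k + hgf n m k + kgf n m k)) +
      (∑ m ∈ Finset.range (n + 2), ∑ k ∈ Finset.range (n + 2),
        (-1 : PowerSeries ℤ) ^ m *
          (ggf n (m + 1) k + hgf n (m + 1) k + kgf n (m + 1) (k + 1)))) ∧
    (∑ m ∈ Finset.range (n + 2), ∑ k ∈ Finset.range (n + 2),
        (-1 : PowerSeries ℤ) ^ m * pgf n m k =
      -(PowerSeries.X ^ (2 * n - 1)) *
        ∑ m ∈ Finset.range (n + 2), ∑ k ∈ Finset.range (n + 2),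
          (-1 : PowerSeries ℤ) ^ m * pgf (n - 1) m k) :=
  telescoped_sum_P_general n h
end
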